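/- arXiv:2505.23142 — 2 statements merged into one kernel-verified Lean document; each statement's English description precedes it below -/
import Mathlib

section
/- Let m ≥ 2, H ≤ Sym(m), and let G be a closed, self-similar, level-transitive subgroup of the iterated wreath product W_H with positive Hausdorff dimension in W_H. Then the center of G is trivial. Consequently, a profinite group with non-trivial center admits no faithful action on a regular rooted tree as a closed, self-similar, level-transitive group of positive Hausdorff dimension. -/
open Filter Topology

/-- Vertices of the `m`-adic rooted tree: finite words over an alphabet of size `m`. -/
abbrev Vtx (m : ℕ) := List (Fin m)

/-- The iterated wreath product `W_H ≤ Aut T`: permutations `f` of the vertex set that fix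
the root and such that at every vertex `v` there is a local permutation `σ ∈ H` with
`f (v ++ [x]) = f v ++ [σ x]` for every letter `x`.  (This encodes exactly the automorphisms
of the `m`-adic tree whose local permutation at every vertex lies in `H`.) -/
def wreath (m : ℕ) (H : Subgroup (Equiv.Perm (Fin m))) : Subgroup (Equiv.Perm (Vtx m)) where
  carrier := {f | f [] = [] ∧
    ∀ v : Vtx m, ∃ σ ∈ H, ∀ x : Fin m, f (v ++ [x]) = f v ++ [σ x]}
  one_mem' := ⟨rfl, fun _ => ⟨1, H.one_mem, fun _ => rfl⟩⟩
  mul_mem' := by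
    rintro f g ⟨hf0, hf⟩ ⟨hg0, hg⟩
    refine ⟨?_, fun v => ?_⟩
    · show f (g []) = []
      rw [hg0, hf0]
    · obtain ⟨τ, hτ, hτ'⟩ := hg v
      obtain ⟨σ, hσ, hσ'⟩ := hf (g v)
      refine ⟨σ * τ, H.mul_mem hσ hτ, fun x => ?_⟩
      show f (g (v ++ [x])) = f (g v) ++ [σ (τ x)]
      rw [hτ' x, hσ' (τ x)]
  inv_mem' := by
    rintro f ⟨hf0, hf⟩
    refine ⟨?_, fun v => ?_⟩
    · calc (f⁻¹ : Equiv.Perm (Vtx m)) [] = f⁻¹ (f []) := by rw [hf0]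
        _ = [] := Equiv.symm_apply_apply f []
    · obtain ⟨σ, hσ, hσ'⟩ := hf (f⁻¹ v)
      refine ⟨σ⁻¹, H.inv_mem hσ, fun x => ?_⟩
      apply Equiv.injective f
      rw [(show ∀ {α : Type} (e : Equiv.Perm α) (y : α), e (e⁻¹ y) = y from fun e y => e.apply_symm_apply y), hσ' (σ⁻¹ x), (show ∀ {α : Type} (e : Equiv.Perm α) (y : α), e (e⁻¹ y) = y from fun e y => e.apply_symm_apply y),
        (show ∀ {α : Type} (e : Equiv.Perm α) (y : α), e (e⁻¹ y) = y from fun e y => e.apply_symm_apply y)]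

/-- The pointwise stabilizer (in the full permutation group of the vertex set)
of the vertices of the first `n` levels of the tree. -/
def levelStab (m n : ℕ) : Subgroup (Equiv.Perm (Vtx m)) :=
  ⨅ v ∈ {v : Vtx m | v.length ≤ n}, MulAction.stabilizer (Equiv.Perm (Vtx m)) v

/-- The Hausdorff dimension of `X` in `G` with respect to the level-stabilizer filtration:
`hdimIn m G X = liminf_n log|X : St_X(n)| / log|G : St_G(n)|`. -/
noncomputable def hdimIn (m : ℕ) (G X : Subgroup (Equiv.Perm (Vtx m))) : ℝ :=
  Filter.liminf (fun n : ℕ =>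
    Real.log ((levelStab m n).relIndex X) / Real.log ((levelStab m n).relIndex G)) Filter.atTop

/-- `X` has strong Hausdorff dimension `α` in `G` if the sequence
`log|X : St_X(n)| / log|G : St_G(n)|` converges to `α` (a proper limit). -/
def hasStrongHdim (m : ℕ) (G X : Subgroup (Equiv.Perm (Vtx m))) (α : ℝ) : Prop :=
  Filter.Tendsto (fun n : ℕ =>
    Real.log ((levelStab m n).relIndex X) / Real.log ((levelStab m n).relIndex G))
    Filter.atTop (nhds α)

/-- The closure of a subgroup of `Aut T` in the profinite (congruence) topology:
`cl(G) = ⋂_n G · St(n)`. -/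
def treeClosure (m : ℕ) (G : Subgroup (Equiv.Perm (Vtx m))) : Subgroup (Equiv.Perm (Vtx m)) :=
  ⨅ n : ℕ, G ⊔ levelStab m n

/-- A subgroup of `Aut T` is closed (in the profinite topology) iff it equals its closure. -/
def IsTreeClosed (m : ℕ) (G : Subgroup (Equiv.Perm (Vtx m))) : Prop :=
  treeClosure m G = G

/-- `G` acts transitively on every level of the tree. -/
def LevelTransitive (m : ℕ) (G : Subgroup (Equiv.Perm (Vtx m))) : Prop :=
  ∀ u v : Vtx m, u.length = v.length → ∃ g ∈ G, g u = v

/-- `G` is self-similar: the section of any `g ∈ G` at any vertex `v` again belongs to `G`,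
i.e. there is `h ∈ G` with `g (v ++ u) = g v ++ h u` for all words `u`. -/
def SelfSimilar (m : ℕ) (G : Subgroup (Equiv.Perm (Vtx m))) : Prop :=
  ∀ g ∈ G, ∀ v : Vtx m, ∃ h ∈ G, ∀ u : Vtx m, g (v ++ u) = g v ++ h u

/-- The rigid vertex stabilizer of `v` in `G`: elements of `G` fixing `v` and every vertex
outside the subtree rooted at `v`. -/
def rist (m : ℕ) (G : Subgroup (Equiv.Perm (Vtx m))) (v : Vtx m) :
    Subgroup (Equiv.Perm (Vtx m)) :=
  G ⊓ ⨅ u ∈ {u : Vtx m | u = v ∨ ¬ v <+: u}, MulAction.stabilizer (Equiv.Perm (Vtx m)) u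

/-- The rigid level stabilizer `Rist_G(n)`: the (internal direct) product of the rigid
vertex stabilizers of the vertices at level `n`, i.e. the subgroup they generate. -/
def RistL (m : ℕ) (G : Subgroup (Equiv.Perm (Vtx m))) (n : ℕ) :
    Subgroup (Equiv.Perm (Vtx m)) :=
  ⨆ v ∈ {v : Vtx m | v.length = n}, rist m G v

/-- `N` is a normal subgroup of `G` (both given as subgroups of an ambient group). -/
def NormalIn {X : Type*} [Group X] (N G : Subgroup X) : Prop :=
  N ≤ G ∧ ∀ g ∈ G, ∀ x ∈ N, g * x * g⁻¹ ∈ N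

/-- The rooted automorphism associated to `σ`: it permutes the first letter by `σ` and is
trivial elsewhere. -/
def rootedPerm (m : ℕ) (σ : Equiv.Perm (Fin m)) : Equiv.Perm (Vtx m) where
  toFun v := match v with
    | [] => []
    | x :: w => σ x :: w
  invFun v := match v with
    | [] => []
    | x :: w => σ⁻¹ x :: w
  left_inv v := by cases v with
    | nil => rfl
    | cons x w => simp
  right_inv v := by cases v with
    | nil => rfl
    | cons x w => simp

/-- The embedding `H → W_H` by rooted automorphisms, as a group homomorphism. -/
def rootedHom (m : ℕ) : Equiv.Perm (Fin m) →* Equiv.Perm (Vtx m) where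
  toFun := rootedPerm m
  map_one' := by
    ext v
    cases v <;> rfl
  map_mul' σ τ := by
    ext v
    cases v <;> rfl

/-- `D_m(K)`: the preimage under the first-level section map `ψ` of the diagonal copy
`{(k,…,k) : k ∈ K}`, i.e. those `f` fixing the first level whose section at every
first-level vertex is one and the same element `k ∈ K`. -/
def diagSub (m : ℕ) (K : Subgroup (Equiv.Perm (Vtx m))) : Subgroup (Equiv.Perm (Vtx m)) where
  carrier := {f | f [] = [] ∧ ∃ k ∈ K, ∀ (x : Fin m) (u : Vtx m), f (x :: u) = x :: k u}
  one_mem' := ⟨rfl, 1, K.one_mem, fun _ _ => rfl⟩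
  mul_mem' := by
    rintro f g ⟨hf0, kf, hkf, hf⟩ ⟨hg0, kg, hkg, hg⟩
    refine ⟨?_, kf * kg, K.mul_mem hkf hkg, fun x u => ?_⟩
    · show f (g []) = []
      rw [hg0, hf0]
    · show f (g (x :: u)) = x :: kf (kg u)
      rw [hg x u, hf x (kg u)]
  inv_mem' := by
    rintro f ⟨hf0, k, hk, hf⟩
    refine ⟨?_, k⁻¹, K.inv_mem hk, fun x u => ?_⟩
    · calc (f⁻¹ : Equiv.Perm (Vtx m)) [] = f⁻¹ (f []) := by rw [hf0]
        _ = [] := Equiv.symm_apply_apply f []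
    · apply Equiv.injective f
      rw [(show ∀ {α : Type} (e : Equiv.Perm α) (y : α), e (e⁻¹ y) = y from fun e y => e.apply_symm_apply y), hf x (k⁻¹ u), (show ∀ {α : Type} (e : Equiv.Perm α) (y : α), e (e⁻¹ y) = y from fun e y => e.apply_symm_apply y)]

/-- The group `G_K = ⟨H, D_m(K)⟩`, where `H` acts by rooted automorphisms. -/
def diagGroup (m : ℕ) (H : Subgroup (Equiv.Perm (Fin m))) (K : Subgroup (Equiv.Perm (Vtx m))) :
    Subgroup (Equiv.Perm (Vtx m)) :=
  H.map (rootedHom m) ⊔ diagSub m K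

/-- The center of a subgroup `G` of an ambient group, as a subgroup of the ambient group. -/
def centerOf {X : Type*} [Group X] (G : Subgroup X) : Subgroup X :=
  Subgroup.centralizer (G : Set X) ⊓ G

/-- The `G`-orbit of a vertex `v`. -/
def orbitSet (m : ℕ) (G : Subgroup (Equiv.Perm (Vtx m))) (v : Vtx m) : Set (Vtx m) :=
  {w | ∃ g ∈ G, g v = w}

/-- The number of `G`-orbits on the `n`-th level of the tree. -/
noncomputable def numOrbits (m : ℕ) (G : Subgroup (Equiv.Perm (Vtx m))) (n : ℕ) : ℕ :=
  Nat.card {s : Set (Vtx m) // ∃ v : Vtx m, v.length = n ∧ s = orbitSet m G v}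

/-!
Let `z ≠ 1` be central in `G`. Since `G` is level-transitive, `z` fixes either all or none of the
vertices of a level, so it moves every vertex of length at least some `n₀ ≥ 1`. Also `H ≠ 1`
because `1 ≠ z ∈ W_H`, whence `log |W_H : St(N + 1)| ≥ m ^ N log 2`.

By self-similarity `z` commutes with every section of every `g ∈ G`, so the labels of `g` at
`v ++ u` and at `v ++ z u` determine each other once `g` is known on the shallower levels.
Hence `g` modulo `St_G(N)` is determined by its labels at one representative of each class of
the equivalence generated by `v ++ u ∼ v ++ z u`. A class at level `ℓ` has at least
`2 ^ (ℓ / n₀)` elements, so there are `o(m ^ N)` classes on the levels `< N`, and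
`log |G : St_G(N)| = o(m ^ N)`. The Hausdorff dimension of `G` is therefore `0`.
-/

open Relation

theorem Subgroup.injective_comp_quotient_out {α β : Type*} [Group α] {K X : Subgroup α}
    (Φ : α → β) (hΦ : ∀ a ∈ X, ∀ b ∈ X, Φ a = Φ b → a⁻¹ * b ∈ K) :
    Function.Injective fun q : X ⧸ K.subgroupOf X => Φ q.out := by
  intro q q' h
  rw [← QuotientGroup.out_eq' q, ← QuotientGroup.out_eq' q', QuotientGroup.eq,
    Subgroup.mem_subgroupOf]
  exact hΦ _ q.out.2 _ q'.out.2 h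

theorem List.modify_append_singleton_of_lt {α : Type*} (f : α → α) {r : ℕ} {v : List α}
    (hr : r < v.length) (x : α) : (v ++ [x]).modify r f = v.modify r f ++ [x] := by
  apply List.ext_getElem
  · simp
  · intro j h₁ h₂
    simp only [List.getElem_modify, List.getElem_append]
    grind

theorem Function.eq_iff_eq_of_comp_eq_comp {α β γ δ : Type*} {p : α → β} {q : γ → δ}
    (hp : Function.Surjective p) (hq : Function.Injective q) {f₁ f₂ : β → δ} {g₁ g₂ : α → γ}
    (h₁ : f₁ ∘ p = q ∘ g₁) (h₂ : f₂ ∘ p = q ∘ g₂) : g₁ = g₂ ↔ f₁ = f₂ := by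
  rw [← hq.comp_left.eq_iff, ← h₁, ← h₂, hp.injective_comp_right.eq_iff]

theorem Relation.EqvGen.apply_eq {α β : Type*} {r : α → α → Prop} {f : α → β}
    (h : ∀ a b, r a b → f a = f b) {a b : α} (hab : Relation.EqvGen r a b) : f a = f b :=
  congrArg (Quot.lift f h) (Quot.eqvGen_sound hab)

theorem tendsto_sum_range_div_pow_atTop {m : ℕ} (hm : 2 ≤ m) {r : ℕ → ℝ} (hr0 : ∀ ℓ, 0 ≤ r ℓ)
    (hr : Tendsto (fun ℓ => r ℓ / (m : ℝ) ^ ℓ) atTop (𝓝 0)) :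
    Tendsto (fun N => (∑ ℓ ∈ Finset.range N, r ℓ) / (m : ℝ) ^ N) atTop (𝓝 0) := by
  have hm1 : (1 : ℝ) < m := by exact_mod_cast hm
  refine tendsto_order.2 ⟨fun a ha => Eventually.of_forall fun N =>
    ha.trans_le (div_nonneg (Finset.sum_nonneg fun ℓ _ => hr0 ℓ) (by positivity)), fun ε hε => ?_⟩
  obtain ⟨L, hL⟩ := eventually_atTop.1 (hr.eventually (gt_mem_nhds (half_pos hε)))
  have hhead : Tendsto (fun N => (∑ ℓ ∈ Finset.range L, r ℓ) / (m : ℝ) ^ N) atTop (𝓝 0) :=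
    tendsto_const_nhds.div_atTop (tendsto_pow_atTop_atTop_of_one_lt hm1)
  filter_upwards [eventually_ge_atTop L, hhead.eventually (gt_mem_nhds (half_pos hε))]
    with N hN hheadN
  have htail : ∑ ℓ ∈ Finset.Ico L N, r ℓ ≤ ε / 2 * (m : ℝ) ^ N :=
    calc ∑ ℓ ∈ Finset.Ico L N, r ℓ ≤ ∑ ℓ ∈ Finset.Ico L N, ε / 2 * (m : ℝ) ^ ℓ :=
          Finset.sum_le_sum fun ℓ hℓ =>
            ((div_lt_iff₀ (by positivity)).1 (hL ℓ (Finset.mem_Ico.1 hℓ).1)).le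
      _ ≤ ∑ ℓ ∈ Finset.range N, ε / 2 * (m : ℝ) ^ ℓ :=
          Finset.sum_le_sum_of_subset_of_nonneg
            (fun ℓ hℓ => Finset.mem_range.2 (Finset.mem_Ico.1 hℓ).2) fun _ _ _ => by positivity
      _ = ε / 2 * ∑ ℓ ∈ Finset.range N, (m : ℝ) ^ ℓ := (Finset.mul_sum _ _ _).symm
      _ ≤ ε / 2 * (m : ℝ) ^ N := by
          gcongr
          exact_mod_cast (Nat.geomSum_lt hm fun k hk => Finset.mem_range.1 hk).le
  rw [← Finset.sum_range_add_sum_Ico _ hN, add_div]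
  calc _ < ε / 2 + ε / 2 := add_lt_add_of_lt_of_le hheadN
        ((div_le_iff₀ (by positivity)).2 htail)
    _ = ε := add_halves ε

namespace TreeAut

variable {m : ℕ} {H : Subgroup (Equiv.Perm (Fin m))} {f f' : Equiv.Perm (Vtx m)}

/-- The local permutation of `f` at `v`, read off from the last letter of `f (v ++ [x])`. -/
def label (f : Equiv.Perm (Vtx m)) (v : Vtx m) (x : Fin m) : Fin m :=
  (f (v ++ [x])).getLastD x

theorem exists_perm_label_eq (hf : f ∈ wreath m H) (v : Vtx m) :
    ∃ σ ∈ H, label f v = σ ∧ ∀ x, f (v ++ [x]) = f v ++ [σ x] := by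
  obtain ⟨σ, hσ, h⟩ := hf.2 v
  exact ⟨σ, hσ, funext fun x => by simp [label, h x], h⟩

theorem apply_append_singleton (hf : f ∈ wreath m H) (v : Vtx m) (x : Fin m) :
    f (v ++ [x]) = f v ++ [label f v x] := by
  obtain ⟨σ, -, hσ, h⟩ := exists_perm_label_eq hf v
  rw [h, hσ]

theorem label_bijective (hf : f ∈ wreath m H) (v : Vtx m) : Function.Bijective (label f v) := by
  obtain ⟨σ, -, hσ, -⟩ := exists_perm_label_eq hf v
  exact hσ ▸ σ.bijective

theorem length_apply (hf : f ∈ wreath m H) (v : Vtx m) : (f v).length = v.length := by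
  induction v using List.reverseRecOn with
  | nil => rw [hf.1]
  | append_singleton v x ih => simp [apply_append_singleton hf, ih]

theorem take_apply_append (hf : f ∈ wreath m H) (v u : Vtx m) :
    (f (v ++ u)).take v.length = f v := by
  induction u using List.reverseRecOn with
  | nil => simp [length_apply hf]
  | append_singleton u x ih =>
    rw [← List.append_assoc, apply_append_singleton hf (v ++ u) x,
      List.take_append_of_le_length (by simp [length_apply hf]), ih]

theorem label_mul (hf : f ∈ wreath m H) (hf' : f' ∈ wreath m H) (v : Vtx m) :
    label (f * f') v = label f (f' v) ∘ label f' v := by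
  funext x
  rw [Function.comp_apply, label, Equiv.Perm.mul_apply, apply_append_singleton hf',
    apply_append_singleton hf, List.getLastD_concat]

theorem label_append_eq_label_section {g h : Equiv.Perm (Vtx m)} (hh : h ∈ wreath m H) {v : Vtx m}
    (hsec : ∀ u, g (v ++ u) = g v ++ h u) (u : Vtx m) : label g (v ++ u) = label h u := by
  funext x
  simp only [label]
  rw [List.append_assoc, hsec, apply_append_singleton hh, ← List.append_assoc,
    List.getLastD_concat, List.getLastD_concat]

theorem eqOn_of_label_eq (hf : f ∈ wreath m H) (hf' : f' ∈ wreath m H) {N : ℕ}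
    (h : ∀ w : Vtx m, w.length < N → label f w = label f' w) :
    ∀ w : Vtx m, w.length ≤ N → f w = f' w := by
  intro w
  induction w using List.reverseRecOn with
  | nil => simp [hf.1, hf'.1]
  | append_singleton v x ih =>
    intro hv
    simp only [List.length_append, List.length_singleton] at hv
    rw [apply_append_singleton hf, apply_append_singleton hf', ih (by omega), h v (by omega)]

theorem exists_ne_one_of_mem_wreath (hf : f ∈ wreath m H) (hf1 : f ≠ 1) : ∃ σ ∈ H, σ ≠ 1 := by
  by_contra! hH
  refine hf1 (Equiv.ext fun w => ?_)
  induction w using List.reverseRecOn with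
  | nil => exact hf.1
  | append_singleton v x ih =>
    obtain ⟨σ, hσH, -, hσ⟩ := exists_perm_label_eq hf v
    simp [hσ, ih, hH σ hσH]

theorem mem_levelStab_iff {n : ℕ} : f ∈ levelStab m n ↔ ∀ w : Vtx m, w.length ≤ n → f w = w := by
  simp only [levelStab, Subgroup.mem_iInf, MulAction.mem_stabilizer_iff, Equiv.Perm.smul_def]
  rfl

theorem inv_mul_mem_levelStab_iff {n : ℕ} :
    f⁻¹ * f' ∈ levelStab m n ↔ ∀ w : Vtx m, w.length ≤ n → f w = f' w := by
  simp only [mem_levelStab_iff, Equiv.Perm.mul_apply, Equiv.Perm.inv_eq_iff_eq]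
  exact forall₂_congr fun _ _ => eq_comm

theorem finite_quotient_levelStab {X : Subgroup (Equiv.Perm (Vtx m))} (hX : X ≤ wreath m H)
    (N : ℕ) : Finite (X ⧸ (levelStab m N).subgroupOf X) := by
  have : Finite {w : Vtx m // w.length < N} := (List.finite_length_lt (Fin m) N).to_subtype
  exact Finite.of_injective _ <| Subgroup.injective_comp_quotient_out
    (fun f (w : {w : Vtx m // w.length < N}) => label f w) fun a ha b hb h =>
      inv_mul_mem_levelStab_iff.2 <| eqOn_of_label_eq (hX ha) (hX hb) fun w hw => congrFun h ⟨w, hw⟩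

noncomputable def level (m ℓ : ℕ) : Finset (Vtx m) :=
  (List.finite_length_eq (Fin m) ℓ).toFinset

theorem mem_level {ℓ : ℕ} {w : Vtx m} : w ∈ level m ℓ ↔ w.length = ℓ := by
  simp [level]

theorem card_level (ℓ : ℕ) : (level m ℓ).card = m ^ ℓ := by
  rw [← Nat.card_eq_finsetCard, Nat.card_congr (Equiv.subtypeEquivRight fun w => mem_level),
    show Nat.card {w : Vtx m // w.length = ℓ} = Nat.card (List.Vector (Fin m) ℓ) from rfl,
    Nat.card_eq_fintype_card, card_vector, Fintype.card_fin]

def twistFun (r : ℕ) (F : Vtx m → Equiv.Perm (Fin m)) (w : Vtx m) : Vtx m :=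
  w.modify r (F (w.take r))

theorem take_twistFun (r : ℕ) (F : Vtx m → Equiv.Perm (Fin m)) (w : Vtx m) :
    (twistFun r F w).take r = w.take r := by
  rw [twistFun, List.take_modify, List.modify_eq_self (by simp)]

theorem twistFun_inv_twistFun (r : ℕ) (F : Vtx m → Equiv.Perm (Fin m)) (w : Vtx m) :
    twistFun r (fun v => (F v)⁻¹) (twistFun r F w) = w := by
  rw [twistFun, take_twistFun, twistFun, List.modify_modify_eq]
  convert List.modify_id r w
  funext x
  simp

def twist (r : ℕ) (F : Vtx m → Equiv.Perm (Fin m)) : Equiv.Perm (Vtx m) where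
  toFun := twistFun r F
  invFun := twistFun r fun v => (F v)⁻¹
  left_inv := twistFun_inv_twistFun r F
  right_inv w := by simpa using twistFun_inv_twistFun r (fun v => (F v)⁻¹) w

theorem twist_of_length_le (r : ℕ) (F : Vtx m → Equiv.Perm (Fin m)) {w : Vtx m}
    (hw : w.length ≤ r) : twist r F w = w :=
  List.modify_eq_self hw

theorem twist_append_singleton_of_length_eq (F : Vtx m → Equiv.Perm (Fin m)) {v : Vtx m}
    (x : Fin m) : twist v.length F (v ++ [x]) = v ++ [F v x] := by
  show twistFun _ _ _ = _
  rw [twistFun, List.take_left, List.modify_eq_take_cons_drop (by simp)]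
  simp

theorem twist_append_singleton_of_lt (F : Vtx m → Equiv.Perm (Fin m)) {r : ℕ} {v : Vtx m}
    (hr : r < v.length) (x : Fin m) : twist r F (v ++ [x]) = twist r F v ++ [x] := by
  show twistFun _ _ _ = twistFun _ _ _ ++ _
  rw [twistFun, twistFun, List.take_append_of_le_length hr.le,
    List.modify_append_singleton_of_lt _ hr]

theorem twist_mem_wreath (r : ℕ) {F : Vtx m → Equiv.Perm (Fin m)} (hF : ∀ v, F v ∈ H) :
    twist r F ∈ wreath m H := by
  refine ⟨twist_of_length_le r F (Nat.zero_le r), fun v => ?_⟩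
  rcases lt_trichotomy v.length r with hv | rfl | hv
  · refine ⟨1, H.one_mem, fun x => ?_⟩
    rw [twist_of_length_le r F hv.le, twist_of_length_le r F (by simpa using hv)]
    rfl
  · refine ⟨F v, hF v, fun x => ?_⟩
    rw [twist_of_length_le _ F le_rfl]
    exact twist_append_singleton_of_length_eq F x
  · exact ⟨1, H.one_mem, twist_append_singleton_of_lt F hv⟩

theorem two_pow_le_relIndex_wreath {σ : Equiv.Perm (Fin m)} (hσH : σ ∈ H) (hσ : σ ≠ 1)
    (N : ℕ) : 2 ^ m ^ N ≤ (levelStab m (N + 1)).relIndex (wreath m H) := by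
  obtain ⟨x, hx⟩ : ∃ x, σ x ≠ x := by
    by_contra! h
    exact hσ (Equiv.ext h)
  let F (S : Finset (Vtx m)) (v : Vtx m) : Equiv.Perm (Fin m) := if v ∈ S then σ else 1
  have hF (S : Finset (Vtx m)) (v : Vtx m) : F S v ∈ H := by
    by_cases hv : v ∈ S <;> simp [F, hv, hσH, H.one_mem]
  have hFx (S : Finset (Vtx m)) (v : Vtx m) : F S v x = σ x ↔ v ∈ S := by
    by_cases hv : v ∈ S <;> simp [F, hv, Ne.symm hx]
  let e (S : (level m N).powerset) : wreath m H ⧸ (levelStab m (N + 1)).subgroupOf (wreath m H) :=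
    QuotientGroup.mk ⟨twist N (F S), twist_mem_wreath N (hF S)⟩
  have he : Function.Injective e := by
    rintro ⟨S, hS⟩ ⟨S', hS'⟩ h
    rw [QuotientGroup.eq, Subgroup.mem_subgroupOf] at h
    have hagree := inv_mul_mem_levelStab_iff.1 h
    simp only [Finset.mem_powerset] at hS hS'
    ext v
    by_cases hv : v.length = N
    · have := hagree (v ++ [x]) (by simp [hv])
      subst hv
      rw [twist_append_singleton_of_length_eq, twist_append_singleton_of_length_eq] at this
      simp only [List.append_cancel_left_eq, List.cons.injEq, and_true] at this
      rw [← hFx S, ← hFx S', this]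
    · exact iff_of_false (fun h => hv (mem_level.1 (hS h))) (fun h => hv (mem_level.1 (hS' h)))
  have := finite_quotient_levelStab (le_refl (wreath m H)) (N + 1)
  calc 2 ^ m ^ N = Nat.card (level m N).powerset := by
        rw [Nat.card_eq_finsetCard, Finset.card_powerset, card_level]
    _ ≤ _ := Nat.card_le_card_of_injective e he

variable {G : Subgroup (Equiv.Perm (Vtx m))} {z : Equiv.Perm (Vtx m)}

theorem apply_eq_self_of_length_eq (hlt : LevelTransitive m G) (hzc : ∀ x ∈ G, z * x = x * z)
    {w w' : Vtx m} (hw : z w = w) (hl : w'.length = w.length) : z w' = w' := by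
  obtain ⟨g, hg, rfl⟩ := hlt w w' hl.symm
  rw [← Equiv.Perm.mul_apply, hzc g hg, Equiv.Perm.mul_apply, hw]

theorem apply_ne_self_of_length_le (hz : z ∈ wreath m H) (hlt : LevelTransitive m G)
    (hzc : ∀ x ∈ G, z * x = x * z) {a w : Vtx m} (ha : z a ≠ a) (hlen : a.length ≤ w.length) :
    z w ≠ w := by
  intro hw
  have hprefix : z (w.take a.length) = w.take a.length := by
    conv_rhs => rw [← hw]
    conv_rhs => rw [← List.take_append_drop a.length w]
    rw [← take_apply_append hz, List.length_take, min_eq_left hlen]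
  exact ha (apply_eq_self_of_length_eq hlt hzc hprefix (by simp [hlen]))

def SuffixStep (z : Equiv.Perm (Vtx m)) (w w' : Vtx m) : Prop :=
  ∃ v u, w = v ++ u ∧ w' = v ++ z u

theorem length_eq_of_eqvGen (hz : z ∈ wreath m H) {w w' : Vtx m}
    (h : EqvGen (SuffixStep z) w w') : w.length = w'.length :=
  EqvGen.apply_eq (f := List.length)
    (by rintro _ _ ⟨v, u, rfl, rfl⟩; simp [length_apply hz]) h

theorem eqvGen_append_left (a : Vtx m) {b b' : Vtx m} (h : EqvGen (SuffixStep z) b b') :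
    EqvGen (SuffixStep z) (a ++ b) (a ++ b') :=
  Quot.eqvGen_exact <| EqvGen.apply_eq (f := fun b => Quot.mk (SuffixStep z) (a ++ b))
    (by rintro _ _ ⟨v, u, rfl, rfl⟩; exact Quot.sound ⟨a ++ v, u, by simp, by simp⟩) h

theorem eqvGen_apply (w : Vtx m) : EqvGen (SuffixStep z) w (z w) :=
  EqvGen.rel _ _ ⟨[], w, rfl, rfl⟩

noncomputable def rep (z : Equiv.Perm (Vtx m)) (w : Vtx m) : Vtx m :=
  (Quot.mk (SuffixStep z) w).out

theorem rep_eq_rep_iff {w w' : Vtx m} : rep z w = rep z w' ↔ EqvGen (SuffixStep z) w w' := by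
  refine ⟨fun h => Quot.eqvGen_exact ?_, fun h => congrArg Quot.out (Quot.eqvGen_sound h)⟩
  simpa only [rep, Quot.out_eq] using congrArg (Quot.mk (SuffixStep z)) h

theorem eqvGen_rep (w : Vtx m) : EqvGen (SuffixStep z) (rep z w) w :=
  Quot.eqvGen_exact (Quot.out_eq _)

theorem rep_rep (w : Vtx m) : rep z (rep z w) = rep z w :=
  rep_eq_rep_iff.2 (eqvGen_rep w)

theorem length_rep (hz : z ∈ wreath m H) (w : Vtx m) : (rep z w).length = w.length :=
  length_eq_of_eqvGen hz (eqvGen_rep w)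

noncomputable def suffixClass (z : Equiv.Perm (Vtx m)) (w : Vtx m) : Finset (Vtx m) :=
  (level m w.length).filter fun x => rep z x = rep z w

theorem mem_suffixClass (hz : z ∈ wreath m H) {w x : Vtx m} :
    x ∈ suffixClass z w ↔ EqvGen (SuffixStep z) w x := by
  rw [suffixClass, Finset.mem_filter, mem_level, rep_eq_rep_iff]
  exact ⟨fun h => EqvGen.symm _ _ h.2,
    fun h => ⟨(length_eq_of_eqvGen hz h).symm, EqvGen.symm _ _ h⟩⟩

/-- If `z` moves every vertex of level `n₀` and `|a| = n₀`, the class of `a ++ b` contains the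
two disjoint copies `a ++ c` and `z (a ++ c)` of the class of `b`. -/
theorem two_pow_le_card_suffixClass (hz : z ∈ wreath m H) {n₀ : ℕ} (hn₀ : 0 < n₀)
    (hmove : ∀ a : Vtx m, a.length = n₀ → z a ≠ a) (w : Vtx m) :
    2 ^ (w.length / n₀) ≤ (suffixClass z w).card := by
  induction hn : w.length using Nat.strong_induction_on generalizing w with
  | _ n ih =>
  rcases lt_or_ge n n₀ with hlt | hge
  · rw [Nat.div_eq_of_lt hlt, pow_zero, Finset.one_le_card]
    exact ⟨w, (mem_suffixClass hz).2 (EqvGen.refl w)⟩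
  obtain ⟨a, b, rfl, ha⟩ : ∃ a b, w = a ++ b ∧ a.length = n₀ :=
    ⟨w.take n₀, w.drop n₀, (List.take_append_drop _ _).symm, by rw [List.length_take]; omega⟩
  have hb : b.length = n - n₀ := by rw [List.length_append] at hn; omega
  let s := suffixClass z b
  have hsub : s.image (a ++ ·) ∪ s.image (fun x => z (a ++ x)) ⊆ suffixClass z (a ++ b) := by
    intro x hx
    rw [mem_suffixClass hz]
    rcases Finset.mem_union.1 hx with hx | hx <;> obtain ⟨y, hy, rfl⟩ := Finset.mem_image.1 hx
    · exact eqvGen_append_left a ((mem_suffixClass hz).1 hy)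
    · exact EqvGen.trans _ _ _ (eqvGen_append_left a ((mem_suffixClass hz).1 hy)) (eqvGen_apply _)
  have hdisj : Disjoint (s.image (a ++ ·)) (s.image (fun x => z (a ++ x))) := by
    simp only [Finset.disjoint_left, Finset.mem_image]
    rintro _ ⟨x, -, rfl⟩ ⟨y, -, hxy⟩
    have := congrArg (List.take a.length) hxy
    rw [take_apply_append hz, List.take_left] at this
    exact hmove a ha this
  calc 2 ^ (n / n₀) = 2 * 2 ^ (b.length / n₀) := by
        rw [hb, Nat.div_eq_sub_div hn₀ hge, pow_succ, mul_comm]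
    _ ≤ 2 * s.card := Nat.mul_le_mul_left 2 (ih _ (by omega) b rfl)
    _ = (s.image (a ++ ·) ∪ s.image (fun x => z (a ++ x))).card := by
        rw [Finset.card_union_of_disjoint hdisj,
          Finset.card_image_of_injective _ fun x y h => List.append_cancel_left h,
          Finset.card_image_of_injective _ fun x y h => List.append_cancel_left (z.injective h),
          two_mul]
    _ ≤ (suffixClass z (a ++ b)).card := Finset.card_le_card hsub

noncomputable def repsAt (z : Equiv.Perm (Vtx m)) (ℓ : ℕ) : Finset (Vtx m) :=
  (level m ℓ).filter fun w => rep z w = w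

theorem two_pow_mul_card_repsAt_le (hz : z ∈ wreath m H) {n₀ : ℕ} (hn₀ : 0 < n₀)
    (hmove : ∀ a : Vtx m, a.length = n₀ → z a ≠ a) (ℓ : ℕ) :
    2 ^ (ℓ / n₀) * (repsAt z ℓ).card ≤ m ^ ℓ := by
  have hmaps : Set.MapsTo (rep z) (level m ℓ) (repsAt z ℓ) := fun w hw => by
    simp only [Finset.mem_coe, repsAt, Finset.mem_filter, mem_level] at hw ⊢
    exact ⟨(length_rep hz w).trans hw, rep_rep w⟩
  rw [← card_level ℓ, Finset.card_eq_sum_card_fiberwise hmaps, mul_comm, ← smul_eq_mul,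
    ← Finset.sum_const]
  refine Finset.sum_le_sum fun r hr => ?_
  simp only [repsAt, Finset.mem_filter, mem_level] at hr
  have hfiber : (level m ℓ).filter (fun w => rep z w = r) = suffixClass z r := by
    rw [suffixClass, hr.1, hr.2]
  rw [hfiber, ← hr.1]
  exact two_pow_le_card_suffixClass hz hn₀ hmove r

noncomputable def repsBelow (z : Equiv.Perm (Vtx m)) (N : ℕ) : Finset (Vtx m) :=
  (Finset.range N).biUnion (repsAt z)

theorem mem_repsBelow {N : ℕ} {w : Vtx m} :
    w ∈ repsBelow z N ↔ w.length < N ∧ rep z w = w := by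
  simp [repsBelow, repsAt, mem_level]

theorem label_comp_label_of_commute {h : Equiv.Perm (Vtx m)} (hh : h ∈ wreath m H)
    (hz : z ∈ wreath m H) (hc : h * z = z * h) (u : Vtx m) :
    label h (z u) ∘ label z u = label z (h u) ∘ label h u := by
  rw [← label_mul hh hz, ← label_mul hz hh, hc]

section SelfSimilar

variable (hGW : G ≤ wreath m H) (hss : SelfSimilar m G) (hz : z ∈ wreath m H)
  (hzc : ∀ x ∈ G, z * x = x * z)
include hGW hss hz hzc

/-- The sections `h`, `h'` of `g`, `g'` at `v` commute with `z`, so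
`label h (z u) ∘ label z u = label z (h u) ∘ label h u`, and likewise for `h'` with the same
labels of `z` once `h u = h' u`. -/
theorem label_eq_iff_of_suffixStep {g g' : Equiv.Perm (Vtx m)} (hg : g ∈ G) (hg' : g' ∈ G)
    {w w' : Vtx m} (hstep : SuffixStep z w w') (hgw : g w = g' w) :
    label g w = label g' w ↔ label g w' = label g' w' := by
  obtain ⟨v, u, rfl, rfl⟩ := hstep
  obtain ⟨h, hh, hsec⟩ := hss g hg v
  obtain ⟨h', hh', hsec'⟩ := hss g' hg' v
  have hhu : h u = h' u := by
    rw [hsec, hsec'] at hgw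
    exact (List.append_inj hgw (by rw [length_apply (hGW hg), length_apply (hGW hg')])).2
  rw [label_append_eq_label_section (hGW hh) hsec, label_append_eq_label_section (hGW hh') hsec',
    label_append_eq_label_section (hGW hh) hsec, label_append_eq_label_section (hGW hh') hsec']
  refine Function.eq_iff_eq_of_comp_eq_comp (label_bijective hz u).2
    (label_bijective hz (h u)).1
    (label_comp_label_of_commute (hGW hh) hz (hzc h hh).symm u) ?_
  rw [hhu]
  exact label_comp_label_of_commute (hGW hh') hz (hzc h' hh').symm u

theorem label_eq_iff_of_eqvGen {g g' : Equiv.Perm (Vtx m)} (hg : g ∈ G) (hg' : g' ∈ G) {k : ℕ}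
    (hagree : ∀ t : Vtx m, t.length ≤ k → g t = g' t) {w w' : Vtx m}
    (h : EqvGen (SuffixStep z) w w') (hw : w.length ≤ k) :
    label g w = label g' w ↔ label g w' = label g' w' := by
  have key := EqvGen.apply_eq (f := fun x => x.length ≤ k → label g x = label g' x)
    (fun a b hab => by
      rw [← length_eq_of_eqvGen hz (EqvGen.rel _ _ hab)]
      exact propext <| imp_congr_right fun ha =>
        label_eq_iff_of_suffixStep hGW hss hz hzc hg hg' hab (hagree a ha)) h
  simpa only [hw, ← length_eq_of_eqvGen hz h, true_implies] using key.to_iff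

theorem label_eq_of_label_eq_on_reps {g g' : Equiv.Perm (Vtx m)} (hg : g ∈ G) (hg' : g' ∈ G)
    {N : ℕ} (hrep : ∀ w : Vtx m, w.length < N → rep z w = w → label g w = label g' w) :
    ∀ w : Vtx m, w.length < N → label g w = label g' w := by
  intro w
  induction hn : w.length using Nat.strong_induction_on generalizing w with
  | _ n ih =>
  intro hnN
  have hagree : ∀ t : Vtx m, t.length ≤ n → g t = g' t :=
    eqOn_of_label_eq (hGW hg) (hGW hg') fun t ht => ih _ ht t rfl (by omega)
  have hlen := length_rep hz w
  exact (label_eq_iff_of_eqvGen hGW hss hz hzc hg hg' hagree (eqvGen_rep w) (by omega)).1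
    (hrep _ (by omega) (rep_rep w))

theorem relIndex_levelStab_le (N : ℕ) :
    (levelStab m N).relIndex G ≤ (m ^ m) ^ (repsBelow z N).card := by
  have hinj := Subgroup.injective_comp_quotient_out (K := levelStab m N) (X := G)
    (fun f (w : repsBelow z N) => label f w) fun a ha b hb h =>
      inv_mul_mem_levelStab_iff.2 <| eqOn_of_label_eq (hGW ha) (hGW hb) <|
        label_eq_of_label_eq_on_reps hGW hss hz hzc ha hb fun w hw hr =>
          congrFun h ⟨w, mem_repsBelow.2 ⟨hw, hr⟩⟩
  calc (levelStab m N).relIndex G ≤ Nat.card (repsBelow z N → Fin m → Fin m) :=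
        Nat.card_le_card_of_injective _ hinj
    _ = (m ^ m) ^ (repsBelow z N).card := by simp

theorem log_relIndex_div_log_relIndex_le (hm : 2 ≤ m) {σ : Equiv.Perm (Fin m)} (hσH : σ ∈ H)
    (hσ : σ ≠ 1) (N : ℕ) :
    Real.log ((levelStab m (N + 1)).relIndex G) /
        Real.log ((levelStab m (N + 1)).relIndex (wreath m H)) ≤
      m ^ 2 * Real.log m / Real.log 2 *
        ((∑ ℓ ∈ Finset.range (N + 1), ((repsAt z ℓ).card : ℝ)) / (m : ℝ) ^ (N + 1)) := by
  set S := ∑ ℓ ∈ Finset.range (N + 1), ((repsAt z ℓ).card : ℝ)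
  have hlogm : 0 ≤ Real.log m := Real.log_natCast_nonneg m
  have hS : ((repsBelow z (N + 1)).card : ℝ) ≤ S := by
    simp only [S, repsBelow]
    exact_mod_cast Finset.card_biUnion_le
  have hG0 : 0 < (levelStab m (N + 1)).relIndex G := by
    have := finite_quotient_levelStab hGW (N + 1)
    exact Nat.pos_of_ne_zero Subgroup.index_ne_zero_of_finite
  have hnum : Real.log ((levelStab m (N + 1)).relIndex G) ≤ S * (m * Real.log m) :=
    calc Real.log ((levelStab m (N + 1)).relIndex G)
        ≤ Real.log (((m ^ m) ^ (repsBelow z (N + 1)).card : ℕ) : ℝ) :=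
          Real.log_le_log (by exact_mod_cast hG0)
            (by exact_mod_cast relIndex_levelStab_le hGW hss hz hzc (N + 1))
      _ = (repsBelow z (N + 1)).card * (m * Real.log m) := by
          push_cast
          rw [Real.log_pow, Real.log_pow]
      _ ≤ S * (m * Real.log m) := by gcongr
  have hden : (m : ℝ) ^ N * Real.log 2 ≤
      Real.log ((levelStab m (N + 1)).relIndex (wreath m H)) :=
    calc (m : ℝ) ^ N * Real.log 2 = Real.log ((2 ^ m ^ N : ℕ) : ℝ) := by
          push_cast
          rw [Real.log_pow]
          push_cast
          ring
      _ ≤ _ := Real.log_le_log (by positivity)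
          (by exact_mod_cast two_pow_le_relIndex_wreath hσH hσ N)
  calc _ ≤ S * (m * Real.log m) / ((m : ℝ) ^ N * Real.log 2) :=
        div_le_div₀ (by positivity) hnum (by positivity) hden
    _ = _ := by
        field_simp
        ring

end SelfSimilar

theorem tendsto_log_relIndex_div_log_relIndex (hm : 2 ≤ m) (hGW : G ≤ wreath m H)
    (hss : SelfSimilar m G) (hlt : LevelTransitive m G) (hzG : z ∈ G)
    (hzc : ∀ x ∈ G, z * x = x * z) (hz1 : z ≠ 1) :
    Tendsto (fun N : ℕ => Real.log ((levelStab m N).relIndex G) /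
      Real.log ((levelStab m N).relIndex (wreath m H))) atTop (𝓝 0) := by
  have hz := hGW hzG
  obtain ⟨σ, hσH, hσ⟩ := exists_ne_one_of_mem_wreath hz hz1
  obtain ⟨a, ha⟩ : ∃ a, z a ≠ a := by
    by_contra! h
    exact hz1 (Equiv.ext h)
  have hn₀ : 0 < a.length := List.length_pos_iff.2 fun h => ha (h ▸ hz.1)
  have hmove : ∀ b : Vtx m, b.length = a.length → z b ≠ b := fun b hb =>
    apply_ne_self_of_length_le hz hlt hzc ha hb.ge
  have hreps : Tendsto (fun ℓ => ((repsAt z ℓ).card : ℝ) / (m : ℝ) ^ ℓ) atTop (𝓝 0) := by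
    refine squeeze_zero (fun ℓ => by positivity) (fun ℓ => ?_)
      ((tendsto_inv_atTop_zero.comp (tendsto_pow_atTop_atTop_of_one_lt one_lt_two)).comp
        (Nat.tendsto_div_const_atTop hn₀.ne'))
    have := two_pow_mul_card_repsAt_le hz hn₀ hmove ℓ
    rw [Function.comp_apply, Function.comp_apply, div_le_iff₀ (by positivity), inv_mul_eq_div,
      le_div_iff₀ (by positivity), mul_comm]
    exact_mod_cast this
  rw [← tendsto_add_atTop_iff_nat 1]
  refine squeeze_zero (fun N => div_nonneg (Real.log_natCast_nonneg _) (Real.log_natCast_nonneg _))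
    (log_relIndex_div_log_relIndex_le hGW hss hz hzc hm hσH hσ) ?_
  simpa using ((tendsto_sum_range_div_pow_atTop hm (fun ℓ => by positivity) hreps).comp
    (tendsto_add_atTop_nat 1)).const_mul (m ^ 2 * Real.log m / Real.log 2)

end TreeAut

theorem statement6_general (m : ℕ) (hm : 2 ≤ m) (H : Subgroup (Equiv.Perm (Fin m)))
    (G : Subgroup (Equiv.Perm (Vtx m))) (hGW : G ≤ wreath m H)
    (hss : SelfSimilar m G) (hlt : LevelTransitive m G)
    (hpos : 0 < hdimIn m (wreath m H) G) :
    (∀ g ∈ G, (∀ x ∈ G, g * x = x * g) → g = 1) ∧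
    (∀ (P : Type) [Group P], (∃ p : P, p ≠ 1 ∧ ∀ q : P, p * q = q * p) →
      ∀ φ : P →* Equiv.Perm (Vtx m), Function.Injective φ → φ.range ≠ G) := by
  have hcenter : ∀ g ∈ G, (∀ x ∈ G, g * x = x * g) → g = 1 := fun z hzG hzc => by
    by_contra hz1
    exact hpos.ne'
      (TreeAut.tendsto_log_relIndex_div_log_relIndex hm hGW hss hlt hzG hzc hz1).liminf_eq
  refine ⟨hcenter, fun P _ ⟨p, hp1, hpc⟩ φ hφ hrange => hp1 (hφ ?_)⟩
  rw [map_one]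
  refine hcenter _ (hrange ▸ ⟨p, rfl⟩) fun x hx => ?_
  obtain ⟨q, rfl⟩ := hrange ▸ hx
  rw [← map_mul, ← map_mul, hpc q]

/-- A closed, self-similar, level-transitive subgroup `G ≤ W_H` with
positive Hausdorff dimension in `W_H` has trivial center.  Consequently, a group with
non-trivial center admits no faithful realization (no injective homomorphism with image `G`)
as such a subgroup. -/
theorem statement6 (m : ℕ) (hm : 2 ≤ m) (H : Subgroup (Equiv.Perm (Fin m)))
    (G : Subgroup (Equiv.Perm (Vtx m))) (hGW : G ≤ wreath m H) (hGcl : IsTreeClosed m G)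
    (hss : SelfSimilar m G) (hlt : LevelTransitive m G)
    (hpos : 0 < hdimIn m (wreath m H) G) :
    (∀ g ∈ G, (∀ x ∈ G, g * x = x * g) → g = 1) ∧
    (∀ (P : Type) [Group P], (∃ p : P, p ≠ 1 ∧ ∀ q : P, p * q = q * p) →
      ∀ φ : P →* Equiv.Perm (Vtx m), Function.Injective φ → φ.range ≠ G) :=
  statement6_general m hm H G hGW hss hlt hpos
end

section
/- Let m ≥ 2, let H ≤ Sym(m) be transitive, and let K be a non-trivial closed subgroup of the iterated wreath product W_H. Let G_K = ⟨H, D_m(K)⟩, where H acts by rooted automorphisms and D_m(K) is the preimage under the first-level section map ψ of the diagonal copy {(k,…,k) : k ∈ K}. Then the center of G_K is isomorphic to Z(H) × Z(K); in particular, if Z(H) ≠ 1 then G_K has non-trivial center. -/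
open Filter Topology

/-! The rooted automorphisms permute the first-level subtrees while an element of `D_m(K)` acts
by one and the same `k` on all of them, so the two kinds of automorphisms commute and
`(σ, k) ↦ σ · ψ⁻¹(k, …, k)` is an isomorphism `H × K ≅ G_K`: it is injective because `σ` is
read off the first letter and `k` off the tail of a word. The center of a product is the product
of the centers. -/

def diagPerm (m : ℕ) (k : Equiv.Perm (Vtx m)) : Equiv.Perm (Vtx m) where
  toFun v := match v with
    | [] => []
    | x :: u => x :: k u
  invFun v := match v with
    | [] => []
    | x :: u => x :: k⁻¹ u
  left_inv v := by cases v with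
    | nil => rfl
    | cons x u => simp
  right_inv v := by cases v with
    | nil => rfl
    | cons x u => simp

def diagHom (m : ℕ) : Equiv.Perm (Vtx m) →* Equiv.Perm (Vtx m) where
  toFun := diagPerm m
  map_one' := by
    ext v
    cases v <;> rfl
  map_mul' k k' := by
    ext v
    cases v <;> rfl

lemma diagSub_eq_map (m : ℕ) (K : Subgroup (Equiv.Perm (Vtx m))) :
    diagSub m K = K.map (diagHom m) := by
  ext f
  constructor
  · rintro ⟨h0, k, hk, hf⟩
    refine ⟨k, hk, Equiv.ext fun v => ?_⟩
    cases v with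
    | nil => exact h0.symm
    | cons x u => exact (hf x u).symm
  · rintro ⟨k, hk, rfl⟩
    exact ⟨rfl, k, hk, fun _ _ => rfl⟩

lemma commute_rootedHom_diagHom (m : ℕ) (σ : Equiv.Perm (Fin m)) (k : Equiv.Perm (Vtx m)) :
    Commute (rootedHom m σ) (diagHom m k) := by
  ext v
  cases v <;> rfl

def rootedDiagHom (m : ℕ) : Equiv.Perm (Fin m) × Equiv.Perm (Vtx m) →* Equiv.Perm (Vtx m) :=
  (rootedHom m).noncommCoprod (diagHom m) (commute_rootedHom_diagHom m)

lemma rootedDiagHom_injective (m : ℕ) : Function.Injective (rootedDiagHom m) := by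
  rw [injective_iff_map_eq_one]
  rintro ⟨σ, k⟩ h
  have hcons (x : Fin m) (u : Vtx m) : σ x :: k u = x :: u := DFunLike.congr_fun h (x :: u)
  have hk (u : Vtx m) : k u = u := by
    rcases u with _ | ⟨x, u⟩
    · cases hk0 : k [] with
      | nil => rfl
      | cons x w => simpa [hk0] using hcons x []
    · exact List.tail_eq_of_cons_eq (hcons x (x :: u))
  exact Prod.ext (Equiv.ext fun x => List.head_eq_of_cons_eq (hcons x [])) (Equiv.ext hk)

namespace Subgroup

variable {G N P : Type*} [Group G] [Group N] [Group P]

lemma map_noncommCoprod_prod (f : G →* P) (g : N →* P) (comm : ∀ a b, Commute (f a) (g b))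
    (H : Subgroup G) (K : Subgroup N) :
    (H.prod K).map (f.noncommCoprod g comm) = H.map f ⊔ K.map g := by
  apply le_antisymm
  · rintro _ ⟨⟨a, b⟩, ⟨ha, hb⟩, rfl⟩
    exact mul_mem (mem_sup_left ⟨a, ha, rfl⟩) (mem_sup_right ⟨b, hb, rfl⟩)
  · refine sup_le ?_ ?_
    · rintro _ ⟨a, ha, rfl⟩
      exact ⟨(a, 1), ⟨ha, K.one_mem⟩, by simp⟩
    · rintro _ ⟨b, hb, rfl⟩
      exact ⟨(1, b), ⟨H.one_mem, hb⟩, by simp⟩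

end Subgroup

lemma diagGroup_eq_map (m : ℕ) (H : Subgroup (Equiv.Perm (Fin m)))
    (K : Subgroup (Equiv.Perm (Vtx m))) :
    diagGroup m H K = (H.prod K).map (rootedDiagHom m) := by
  rw [diagGroup, diagSub_eq_map, rootedDiagHom, Subgroup.map_noncommCoprod_prod]

section centerOf

variable {G N : Type*} [Group G] [Group N]

lemma centerOf_map_of_injective {f : G →* N} (hf : Function.Injective f) (H : Subgroup G) :
    centerOf (H.map f) = (centerOf H).map f := by
  ext y
  simp only [centerOf, Subgroup.mem_inf, Subgroup.mem_map, Subgroup.mem_centralizer_iff,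
    SetLike.mem_coe]
  constructor
  · rintro ⟨hc, x, hx, rfl⟩
    refine ⟨x, ⟨fun g hg => hf ?_, hx⟩, rfl⟩
    simpa only [map_mul] using hc (f g) ⟨g, hg, rfl⟩
  · rintro ⟨x, ⟨hc, hx⟩, rfl⟩
    refine ⟨?_, x, hx, rfl⟩
    rintro _ ⟨g, hg, rfl⟩
    rw [← map_mul, ← map_mul, hc g hg]

lemma centerOf_prod (H : Subgroup G) (K : Subgroup N) :
    centerOf (H.prod K) = (centerOf H).prod (centerOf K) := by
  ext ⟨x, y⟩
  simp only [centerOf, Subgroup.mem_inf, Subgroup.mem_prod, Subgroup.mem_centralizer_iff,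
    SetLike.mem_coe]
  constructor
  · rintro ⟨hc, hx, hy⟩
    exact ⟨⟨fun g hg => congrArg Prod.fst (hc (g, 1) ⟨hg, K.one_mem⟩), hx⟩,
      ⟨fun h hh => congrArg Prod.snd (hc (1, h) ⟨H.one_mem, hh⟩), hy⟩⟩
  · rintro ⟨⟨hcx, hx⟩, ⟨hcy, hy⟩⟩
    exact ⟨fun p hp => Prod.ext (hcx p.1 hp.1) (hcy p.2 hp.2), hx, hy⟩

end centerOf

theorem statement10_general (m : ℕ) (H : Subgroup (Equiv.Perm (Fin m)))
    (K : Subgroup (Equiv.Perm (Vtx m))) :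
    Nonempty (↥(centerOf (diagGroup m H K)) ≃* ↥(centerOf H) × ↥(centerOf K)) ∧
    (centerOf H ≠ ⊥ → centerOf (diagGroup m H K) ≠ ⊥) := by
  have hinj := rootedDiagHom_injective m
  have hcenter : centerOf (diagGroup m H K) =
      ((centerOf H).prod (centerOf K)).map (rootedDiagHom m) := by
    rw [diagGroup_eq_map, centerOf_map_of_injective hinj, centerOf_prod]
  refine ⟨⟨(MulEquiv.subgroupCongr hcenter).trans
    ((Subgroup.equivMapOfInjective _ _ hinj).symm.trans (Subgroup.prodEquiv _ _))⟩, ?_⟩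
  intro hH hbot
  rw [hcenter, Subgroup.map_eq_bot_iff_of_injective _ hinj, Subgroup.prod_eq_bot_iff] at hbot
  exact hH hbot.1

/-- For `H ≤ Sym(m)` transitive and `1 ≠ K ≤ W_H` closed, the center of
`G_K = ⟨H, D_m(K)⟩` is isomorphic to `Z(H) × Z(K)`; in particular if `Z(H) ≠ 1` then `G_K`
has non-trivial center. -/
theorem statement10 (m : ℕ) (hm : 2 ≤ m) (H : Subgroup (Equiv.Perm (Fin m)))
    (hHtrans : ∀ x y : Fin m, ∃ σ ∈ H, σ x = y)
    (K : Subgroup (Equiv.Perm (Vtx m))) (hKW : K ≤ wreath m H) (hKcl : IsTreeClosed m K)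
    (hKne : K ≠ ⊥) :
    Nonempty (↥(centerOf (diagGroup m H K)) ≃* ↥(centerOf H) × ↥(centerOf K)) ∧
    (centerOf H ≠ ⊥ → centerOf (diagGroup m H K) ≠ ⊥) :=
  statement10_general m H K
end
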